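/- arXiv:2203.11353 — 7 statements merged into one kernel-verified Lean document; each statement's English description precedes it below -/
import Mathlib

section
/- For every integer N ≥ 1, the N×N matrix Δ with entries Δ_{t,t'} = Σ_{k=0}^{N−1} (−2πik/N²)·e^{2πik(t−t')/N} satisfies: (i) the matrix exponential exp(Δ) equals the cyclic shift matrix U₊ (with (U₊)_{t,t'} = 1 if t ≡ t'+1 (mod N) and 0 otherwise); and (ii) the spectral norm of Δ equals 2π(N−1)/N; in particular ‖Δ‖ < 2π. -/
/-!
The unitary discrete Fourier transform `F` diagonalises both matrices: `Δ = F D F⋆` with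
`D = diag(-2πik/N)`, and `U₊ = F exp(D) F⋆`, because conjugating `diag(e^{-2πijk/N})` by `F`
produces, by orthogonality of the characters of `ℤ/N`, the indicator of `t - t' ≡ j (mod N)`.
Hence `exp Δ = F exp(D) F⋆ = U₊`, and since `F` is unitary, `‖Δ‖ = ‖D‖ = max_k 2πk/N`,
which is attained at `k = N - 1`.
-/

open scoped Matrix.Norms.L2Operator Kronecker
open Matrix

/-- The `N×N` clock-displacement generator
`Δ_{t,t'} = ∑_{k=0}^{N−1} (−2πik/N²)·e^{2πik(t−t')/N}`. -/
noncomputable def DeltaMat (N : ℕ) : Matrix (Fin N) (Fin N) ℂ := fun t t' =>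
  ∑ k ∈ Finset.range N,
    (-(2 * Real.pi * Complex.I * k) / (N : ℂ) ^ 2) *
      Complex.exp (2 * Real.pi * Complex.I * k * (((t : ℕ) : ℂ) - ((t' : ℕ) : ℂ)) / N)

/-- The cyclic shift matrix `(U₊)_{t,t'} = 1` iff `t ≡ t' + 1 (mod N)`. -/
def shiftMat (N : ℕ) : Matrix (Fin N) (Fin N) ℂ := fun t t' =>
  if ((t : ℕ) : ZMod N) = ((t' : ℕ) : ZMod N) + 1 then 1 else 0

open Complex Real Finset

theorem Matrix.exp_mul_mul_star_of_mem_unitary {n 𝔸 : Type*} [Fintype n] [DecidableEq n]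
    [NormedRing 𝔸] [NormedAlgebra ℚ 𝔸] [CompleteSpace 𝔸] [StarRing 𝔸] {U : Matrix n n 𝔸}
    (hU : U ∈ unitary (Matrix n n 𝔸)) (A : Matrix n n 𝔸) :
    NormedSpace.exp (U * A * star U) = U * NormedSpace.exp A * star U :=
  Matrix.exp_units_conj (Unitary.toUnits ⟨U, hU⟩) A

theorem CStarRing.norm_mul_mul_star_of_mem_unitary {E : Type*} [NormedRing E] [StarRing E]
    [CStarRing E] {U : E} (hU : U ∈ unitary E) (A : E) : ‖U * A * star U‖ = ‖A‖ := by
  rw [CStarRing.norm_mul_mem_unitary _ (Unitary.star_mem hU), CStarRing.norm_mem_unitary_mul _ hU]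

theorem sum_range_exp_int_mul_div_eq_ite {N : ℕ} (hN : N ≠ 0) (m : ℤ) :
    ∑ k ∈ range N, cexp (2 * π * I * m * k / N) = if (N : ℤ) ∣ m then (N : ℂ) else 0 := by
  have hζ := Complex.isPrimitiveRoot_exp N hN
  set ζ := cexp (2 * π * I / N)
  have hterm (k : ℕ) : cexp (2 * π * I * m * k / N) = (ζ ^ m) ^ k := by
    rw [← zpow_natCast, ← _root_.zpow_mul, ← Complex.exp_int_mul]
    push_cast
    ring_nf
  simp_rw [hterm]
  split_ifs with hdvd
  · simp [(hζ.zpow_eq_one_iff_dvd m).mpr hdvd]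
  · have hne : ζ ^ m - 1 ≠ 0 := sub_ne_zero.mpr fun h => hdvd ((hζ.zpow_eq_one_iff_dvd m).mp h)
    have hpow : (ζ ^ m) ^ N = 1 := by
      rw [← zpow_natCast, ← _root_.zpow_mul]
      exact (hζ.zpow_eq_one_iff_dvd _).mpr (dvd_mul_left _ _)
    apply (mul_eq_zero.mp _).resolve_right hne
    rw [geom_sum_mul, hpow, sub_self]

theorem Fin.intCast_dvd_val_sub_val_iff {N : ℕ} (t t' : Fin N) :
    (N : ℤ) ∣ (t : ℕ) - (t' : ℕ) ↔ t = t' := by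
  refine ⟨fun h => Fin.ext ?_, fun h => by simp [h]⟩
  have := Int.eq_zero_of_abs_lt_dvd h (abs_sub_lt_iff.mpr ⟨by omega, by omega⟩)
  omega

noncomputable def fourierMatrix (N : ℕ) : Matrix (Fin N) (Fin N) ℂ := fun t k =>
  ((√N)⁻¹ : ℝ) * cexp (2 * π * I * (t : ℕ) * (k : ℕ) / N)

noncomputable def deltaEigenvalue (N : ℕ) (k : Fin N) : ℂ := -(2 * π * I * (k : ℕ)) / N

theorem fourierMatrix_mul_star_fourierMatrix (N : ℕ) (t t' k : Fin N) :
    fourierMatrix N t k * star (fourierMatrix N t' k) =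
      (N : ℂ)⁻¹ * cexp (2 * π * I * (k : ℕ) * (((t : ℕ) : ℂ) - (t' : ℕ)) / N) := by
  have hsqrt : (((√N)⁻¹ : ℝ) : ℂ) * (((√N)⁻¹ : ℝ) : ℂ) = (N : ℂ)⁻¹ := by
    rw [← Complex.ofReal_mul, ← mul_inv, Real.mul_self_sqrt N.cast_nonneg]
    push_cast
    rfl
  simp only [fourierMatrix, star_mul', Complex.star_def, Complex.conj_ofReal, ← Complex.exp_conj,
    map_div₀, map_mul, Complex.conj_I, Complex.conj_natCast, map_ofNat]
  rw [mul_mul_mul_comm, hsqrt, ← Complex.exp_add]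
  ring_nf

theorem fourierMatrix_mul_diagonal_mul_star_apply (N : ℕ) (f : Fin N → ℂ) (t t' : Fin N) :
    (fourierMatrix N * diagonal f * star (fourierMatrix N)) t t' =
      (N : ℂ)⁻¹ *
        ∑ k : Fin N, f k * cexp (2 * π * I * (k : ℕ) * (((t : ℕ) : ℂ) - (t' : ℕ)) / N) := by
  rw [mul_apply, mul_sum]
  refine sum_congr rfl fun k _ => ?_
  rw [mul_diagonal, star_apply, mul_right_comm, fourierMatrix_mul_star_fourierMatrix]
  ring

theorem fourierMatrix_mul_diagonal_exp_int_mul_mul_star_apply {N : ℕ} (hN : N ≠ 0) (j : ℤ)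
    (t t' : Fin N) :
    (fourierMatrix N * diagonal (fun k => cexp (j * deltaEigenvalue N k)) *
        star (fourierMatrix N)) t t' =
      if (N : ℤ) ∣ (t : ℕ) - (t' : ℕ) - j then 1 else 0 := by
  have hterm (k : Fin N) : cexp (j * deltaEigenvalue N k) *
        cexp (2 * π * I * (k : ℕ) * (((t : ℕ) : ℂ) - (t' : ℕ)) / N) =
      cexp (2 * π * I * (((t : ℕ) - (t' : ℕ) - j : ℤ) : ℂ) * (k : ℕ) / N) := by
    rw [deltaEigenvalue, ← Complex.exp_add]
    push_cast
    ring_nf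
  rw [fourierMatrix_mul_diagonal_mul_star_apply]
  simp_rw [hterm]
  rw [Fin.sum_univ_eq_sum_range (fun k : ℕ =>
      cexp (2 * π * I * (((t : ℕ) - (t' : ℕ) - j : ℤ) : ℂ) * k / N)),
    sum_range_exp_int_mul_div_eq_ite hN]
  split_ifs
  · exact inv_mul_cancel₀ (Nat.cast_ne_zero.mpr hN)
  · exact mul_zero _

theorem fourierMatrix_mul_star {N : ℕ} (hN : N ≠ 0) :
    fourierMatrix N * star (fourierMatrix N) = 1 := by
  ext t t'
  have h := fourierMatrix_mul_diagonal_exp_int_mul_mul_star_apply hN 0 t t'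
  simp only [Int.cast_zero, zero_mul, Complex.exp_zero, diagonal_one, mul_one, sub_zero,
    Fin.intCast_dvd_val_sub_val_iff] at h
  rw [h, one_apply]

theorem fourierMatrix_mem_unitary {N : ℕ} (hN : N ≠ 0) :
    fourierMatrix N ∈ unitary (Matrix (Fin N) (Fin N) ℂ) :=
  Matrix.mem_unitaryGroup_iff.mpr (fourierMatrix_mul_star hN)

theorem fourierMatrix_mul_diagonal_exp_deltaEigenvalue_mul_star {N : ℕ} (hN : N ≠ 0) :
    fourierMatrix N * diagonal (fun k => cexp (deltaEigenvalue N k)) * star (fourierMatrix N) =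
      shiftMat N := by
  ext t t'
  have h := fourierMatrix_mul_diagonal_exp_int_mul_mul_star_apply hN 1 t t'
  simp only [Int.cast_one, one_mul] at h
  simp only [h, shiftMat, ← ZMod.intCast_zmod_eq_zero_iff_dvd, Int.cast_sub, Int.cast_natCast,
    Int.cast_one, sub_sub, sub_eq_zero, Int.cast_add]

theorem DeltaMat_eq_fourierMatrix_mul_diagonal_mul_star (N : ℕ) :
    DeltaMat N = fourierMatrix N * diagonal (deltaEigenvalue N) * star (fourierMatrix N) := by
  ext t t'
  rw [fourierMatrix_mul_diagonal_mul_star_apply, DeltaMat, mul_sum, ← Fin.sum_univ_eq_sum_range]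
  refine sum_congr rfl fun k _ => ?_
  rw [deltaEigenvalue]
  ring

theorem norm_deltaEigenvalue_apply (N : ℕ) (k : Fin N) :
    ‖deltaEigenvalue N k‖ = 2 * π * (k : ℕ) / N := by
  simp [deltaEigenvalue, abs_of_pos pi_pos]

theorem norm_deltaEigenvalue {N : ℕ} (hN : N ≠ 0) :
    ‖deltaEigenvalue N‖ = 2 * π * (N - 1) / N := by
  have hN1 : (1 : ℝ) ≤ N := Nat.one_le_cast.mpr (Nat.one_le_iff_ne_zero.mpr hN)
  refine le_antisymm ((pi_norm_le_iff_of_nonneg (by positivity)).mpr fun k => ?_) ?_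
  · have hk : ((k : ℕ) : ℝ) ≤ N - 1 := by
      rw [le_sub_iff_add_le]
      exact_mod_cast k.isLt
    rw [norm_deltaEigenvalue_apply]
    gcongr
  · have h := norm_le_pi_norm (deltaEigenvalue N) ⟨N - 1, by omega⟩
    rwa [norm_deltaEigenvalue_apply, Nat.cast_sub (by omega), Nat.cast_one] at h

theorem stmt3 (N : ℕ) (hN : 1 ≤ N) :
    NormedSpace.exp (DeltaMat N) = shiftMat N ∧
    ‖DeltaMat N‖ = 2 * Real.pi * (N - 1) / N ∧
    ‖DeltaMat N‖ < 2 * Real.pi := by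
  have hN0 : N ≠ 0 := Nat.one_le_iff_ne_zero.mp hN
  have hU := fourierMatrix_mem_unitary hN0
  have hnorm : ‖DeltaMat N‖ = 2 * π * (N - 1) / N := by
    rw [DeltaMat_eq_fourierMatrix_mul_diagonal_mul_star,
      CStarRing.norm_mul_mul_star_of_mem_unitary hU, l2_opNorm_diagonal, norm_deltaEigenvalue hN0]
  refine ⟨?_, hnorm, ?_⟩
  · rw [DeltaMat_eq_fourierMatrix_mul_diagonal_mul_star,
      Matrix.exp_mul_mul_star_of_mem_unitary hU, exp_diagonal,
      ← fourierMatrix_mul_diagonal_exp_deltaEigenvalue_mul_star hN0, Pi.exp_def,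
      Complex.exp_eq_exp_ℂ]
  · have hNpos : (0 : ℝ) < N := Nat.cast_pos.mpr (Nat.pos_of_ne_zero hN0)
    rw [hnorm, div_lt_iff₀ hNpos]
    nlinarith [pi_pos]
end

section
/- Let d ≥ 1 and M ≥ 1 be integers, and let U, V : ℝ → M_d(ℂ) be infinitely differentiable matrix-valued functions such that: U(t) is unitary for every t; U(0) = 1; U(t)* = U(−t) and V(t)* = V(−t) for every t (where * is the conjugate transpose); and (V−U)^{(n)}(0) = 0 for every 0 ≤ n ≤ 2M. Then all derivatives of order ≤ 2M+1 of the function t ↦ V(t)*·V(t) − 1 vanish at t = 0; in particular ‖V(t)*·V(t) − 1‖ = O(t^{2M+2}) as t → 0. -/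
open scoped Matrix.Norms.L2Operator
open Matrix

section Aux

variable {F : Type*} [NormedAddCommGroup F] [NormedSpace ℝ F]
variable {𝔸 : Type*} [NormedRing 𝔸] [NormedAlgebra ℝ 𝔸]

/-- `f` is flat to order `k` at `0`: all derivatives of order `≤ k` vanish at `0`. -/
def MyFlat (f : ℝ → F) (k : ℕ) : Prop := ∀ n ≤ k, iteratedDeriv n f 0 = 0

lemma mySmooth_diff {f : ℝ → F} (hf : ContDiff ℝ (⊤ : ℕ∞) f) : Differentiable ℝ f :=
  hf.differentiable (by simp)

lemma mySmooth_deriv {f : ℝ → F} (hf : ContDiff ℝ (⊤ : ℕ∞) f) :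
    ContDiff ℝ (⊤ : ℕ∞) (deriv f) :=
  (contDiff_infty_iff_deriv.mp hf).2

lemma myIteratedDeriv_add {f g : ℝ → F} (n : ℕ) (hf : ContDiff ℝ (⊤ : ℕ∞) f)
    (hg : ContDiff ℝ (⊤ : ℕ∞) g) (x : ℝ) :
    iteratedDeriv n (fun t => f t + g t) x = iteratedDeriv n f x + iteratedDeriv n g x := by
  have h1 := iteratedDerivWithin_add (n := n) (Set.mem_univ x) uniqueDiffOn_univ
    (hf.contDiffWithinAt.of_le (by exact_mod_cast (le_top : (n : ℕ∞) ≤ ⊤)))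
    (hg.contDiffWithinAt.of_le (by exact_mod_cast (le_top : (n : ℕ∞) ≤ ⊤)))
  simp only [iteratedDerivWithin_univ] at h1; exact h1

lemma MyFlat.of_le {f : ℝ → F} {k l : ℕ} (h : MyFlat f k) (hl : l ≤ k) : MyFlat f l :=
  fun n hn => h n (hn.trans hl)

lemma MyFlat.add {f g : ℝ → F} {k : ℕ} (hf' : ContDiff ℝ (⊤ : ℕ∞) f)
    (hg' : ContDiff ℝ (⊤ : ℕ∞) g) (hf : MyFlat f k) (hg : MyFlat g k) :
    MyFlat (fun t => f t + g t) k := fun n hn => by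
  rw [myIteratedDeriv_add n hf' hg', hf n hn, hg n hn, add_zero]

lemma MyFlat.smul {f : ℝ → F} {k : ℕ} (c : ℝ) (hsm : ContDiff ℝ (⊤ : ℕ∞) f)
    (hf : MyFlat f k) : MyFlat (fun t => c • f t) k := fun n hn => by
  have : iteratedDeriv n (fun t => c • f t) 0 = c • iteratedDeriv n f 0 := by
    simpa [iteratedDerivWithin_univ] using
      iteratedDerivWithin_const_smul (f := f) (s := Set.univ) (n := n) (Set.mem_univ (0:ℝ))
        uniqueDiffOn_univ c (hsm.contDiffOn.of_le (by exact_mod_cast le_top))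
  rw [this, hf n hn, smul_zero]

lemma MyFlat.derivFlat {f : ℝ → F} {k : ℕ} (h : MyFlat f (k + 1)) : MyFlat (deriv f) k :=
  fun n hn => by rw [← iteratedDeriv_succ']; exact h (n + 1) (by omega)

lemma MyFlat.comp_neg {f : ℝ → F} {k : ℕ} (h : MyFlat f k) :
    MyFlat (fun t => f (-t)) k := fun n hn => by
  rw [iteratedDeriv_comp_neg, neg_zero, h n hn, smul_zero]

lemma mySmooth_comp_neg {f : ℝ → F} (hf : ContDiff ℝ (⊤ : ℕ∞) f) :
    ContDiff ℝ (⊤ : ℕ∞) (fun t => f (-t)) := hf.comp contDiff_id.neg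

lemma myDeriv_mul {f g : ℝ → 𝔸} (hf : ContDiff ℝ (⊤ : ℕ∞) f) (hg : ContDiff ℝ (⊤ : ℕ∞) g) :
    deriv (fun t => f t * g t) = fun t => deriv f t * g t + f t * deriv g t := by
  funext t
  exact deriv_mul (mySmooth_diff hf t) (mySmooth_diff hg t)

lemma MyFlat.mul_right {k : ℕ} : ∀ {f g : ℝ → 𝔸}, ContDiff ℝ (⊤ : ℕ∞) f →
    ContDiff ℝ (⊤ : ℕ∞) g → MyFlat f k → MyFlat (fun t => f t * g t) k := by
  induction k with
  | zero =>
    intro f g hf hg hfl n hn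
    obtain rfl : n = 0 := Nat.le_zero.mp hn
    have h0 : f 0 = 0 := by simpa using hfl 0 le_rfl
    simp [iteratedDeriv_zero, h0]
  | succ k ih =>
    intro f g hf hg hfl n hn
    match n with
    | 0 =>
      have h0 : f 0 = 0 := by simpa using hfl 0 (by omega)
      simp [iteratedDeriv_zero, h0]
    | m + 1 =>
      rw [iteratedDeriv_succ', myDeriv_mul hf hg]
      have h1 : MyFlat (fun t => deriv f t * g t) k :=
        ih (mySmooth_deriv hf) hg hfl.derivFlat
      have h2 : MyFlat (fun t => f t * deriv g t) k :=
        ih hf (mySmooth_deriv hg) (hfl.of_le (by omega))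
      exact (h1.add ((mySmooth_deriv hf).mul hg) (hf.mul (mySmooth_deriv hg)) h2) m (by omega)

lemma MyFlat.mul_left {k : ℕ} : ∀ {f g : ℝ → 𝔸}, ContDiff ℝ (⊤ : ℕ∞) f →
    ContDiff ℝ (⊤ : ℕ∞) g → MyFlat g k → MyFlat (fun t => f t * g t) k := by
  induction k with
  | zero =>
    intro f g hf hg hfl n hn
    obtain rfl : n = 0 := Nat.le_zero.mp hn
    have h0 : g 0 = 0 := by simpa using hfl 0 le_rfl
    simp [iteratedDeriv_zero, h0]
  | succ k ih =>
    intro f g hf hg hfl n hn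
    match n with
    | 0 =>
      have h0 : g 0 = 0 := by simpa using hfl 0 (by omega)
      simp [iteratedDeriv_zero, h0]
    | m + 1 =>
      rw [iteratedDeriv_succ', myDeriv_mul hf hg]
      have h1 : MyFlat (fun t => deriv f t * g t) k :=
        ih (mySmooth_deriv hf) hg (hfl.of_le (by omega))
      have h2 : MyFlat (fun t => f t * deriv g t) k :=
        ih hf (mySmooth_deriv hg) hfl.derivFlat
      exact (h1.add ((mySmooth_deriv hf).mul hg) (hf.mul (mySmooth_deriv hg)) h2) m (by omega)

lemma MyFlat.mul_flat {k : ℕ} : ∀ {f g : ℝ → 𝔸}, ContDiff ℝ (⊤ : ℕ∞) f →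
    ContDiff ℝ (⊤ : ℕ∞) g → MyFlat f k → g 0 = 0 → MyFlat (fun t => f t * g t) (k + 1) := by
  induction k with
  | zero =>
    intro f g hf hg hfl hg0 n hn
    have h0 : f 0 = 0 := by simpa using hfl 0 le_rfl
    match n with
    | 0 => simp [iteratedDeriv_zero, h0]
    | 1 =>
      rw [iteratedDeriv_succ', myDeriv_mul hf hg, iteratedDeriv_zero]
      simp [h0, hg0]
  | succ k ih =>
    intro f g hf hg hfl hg0 n hn
    match n with
    | 0 =>
      have h0 : f 0 = 0 := by simpa using hfl 0 (by omega)
      simp [iteratedDeriv_zero, h0]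
    | m + 1 =>
      rw [iteratedDeriv_succ', myDeriv_mul hf hg]
      have h1 : MyFlat (fun t => deriv f t * g t) (k + 1) :=
        ih (mySmooth_deriv hf) hg hfl.derivFlat hg0
      have h2 : MyFlat (fun t => f t * deriv g t) (k + 1) :=
        MyFlat.mul_right hf (mySmooth_deriv hg) hfl
      exact (h1.add ((mySmooth_deriv hf).mul hg) (hf.mul (mySmooth_deriv hg)) h2) m (by omega)

lemma myDeriv_G {A B f : ℝ → 𝔸} (hA : ContDiff ℝ (⊤ : ℕ∞) A) (hB : ContDiff ℝ (⊤ : ℕ∞) B)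
    (hf : ContDiff ℝ (⊤ : ℕ∞) f) (c : ℝ) :
    deriv (fun t => A t * f t + c • (f (-t) * B t)) =
      fun t => (A t * deriv f t + (-c) • (deriv f (-t) * B t)) +
        (deriv A t * f t + c • (f (-t) * deriv B t)) := by
  have hfn : ContDiff ℝ (⊤ : ℕ∞) (fun t => f (-t)) := mySmooth_comp_neg hf
  funext t
  have d1 : DifferentiableAt ℝ (fun t => A t * f t) t :=
    ((mySmooth_diff hA t).mul (mySmooth_diff hf t))
  have d2 : DifferentiableAt ℝ (fun t => f (-t) * B t) t :=
    ((mySmooth_diff hfn t).mul (mySmooth_diff hB t))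
  rw [deriv_fun_add (g := fun t => c • (f (-t) * B t)) d1 (d2.const_smul c), deriv_fun_const_smul c d2,
    deriv_fun_mul (mySmooth_diff hA t) (mySmooth_diff hf t),
    deriv_fun_mul (mySmooth_diff hfn t) (mySmooth_diff hB t), deriv_comp_neg]
  simp only [smul_add, neg_smul, smul_neg, neg_mul]
  abel

lemma myKey : ∀ (k : ℕ) {A B f : ℝ → 𝔸}, ContDiff ℝ (⊤ : ℕ∞) A → ContDiff ℝ (⊤ : ℕ∞) B →
    ContDiff ℝ (⊤ : ℕ∞) f → A 0 = 1 → B 0 = 1 → MyFlat f k →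
    MyFlat (fun t => A t * f t + ((-1 : ℝ) ^ k) • (f (-t) * B t)) (k + 1) := by
  intro k
  induction k with
  | zero =>
    intro A B f hA hB hf hA0 hB0 hfl n hn
    have h0 : f 0 = 0 := by simpa using hfl 0 le_rfl
    match n with
    | 0 => simp [iteratedDeriv_zero, h0]
    | 1 =>
      rw [iteratedDeriv_succ', myDeriv_G hA hB hf, iteratedDeriv_zero]
      simp [h0, hA0, hB0]
  | succ k ih =>
    intro A B f hA hB hf hA0 hB0 hfl n hn
    have h0 : f 0 = 0 := by simpa using hfl 0 (by omega)
    match n with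
    | 0 => simp [iteratedDeriv_zero, h0]
    | m + 1 =>
      rw [iteratedDeriv_succ', myDeriv_G hA hB hf]
      have hc : -((-1 : ℝ) ^ (k + 1)) = (-1 : ℝ) ^ k := by ring
      have h1 : MyFlat (fun t => A t * deriv f t + ((-1 : ℝ) ^ k) • (deriv f (-t) * B t))
          (k + 1) := ih hA hB (mySmooth_deriv hf) hA0 hB0 hfl.derivFlat
      rw [hc]
      have h2a : MyFlat (fun t => deriv A t * f t) (k + 1) :=
        MyFlat.mul_left (mySmooth_deriv hA) hf hfl
      have h2b : MyFlat (fun t => ((-1 : ℝ) ^ (k + 1)) • (f (-t) * deriv B t)) (k + 1) :=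
        (MyFlat.mul_right (mySmooth_comp_neg hf) (mySmooth_deriv hB) hfl.comp_neg).smul _ (((mySmooth_comp_neg hf).mul (mySmooth_deriv hB)))
      have h2 : MyFlat (fun t => deriv A t * f t + ((-1 : ℝ) ^ (k + 1)) • (f (-t) * deriv B t))
          (k + 1) := h2a.add ((mySmooth_deriv hA).mul hf)
          (((mySmooth_comp_neg hf).mul (mySmooth_deriv hB)).const_smul _) h2b
      have hs1 : ContDiff ℝ (⊤ : ℕ∞)
          (fun t => A t * deriv f t + ((-1 : ℝ) ^ k) • (deriv f (-t) * B t)) :=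
        (hA.mul (mySmooth_deriv hf)).add
          (((mySmooth_comp_neg (mySmooth_deriv hf)).mul hB).const_smul _)
      have hs2 : ContDiff ℝ (⊤ : ℕ∞)
          (fun t => deriv A t * f t + ((-1 : ℝ) ^ (k + 1)) • (f (-t) * deriv B t)) :=
        ((mySmooth_deriv hA).mul hf).add
          (((mySmooth_comp_neg hf).mul (mySmooth_deriv hB)).const_smul _)
      exact (h1.add hs1 hs2 h2) m (by omega)

lemma myTaylorBound : ∀ (m : ℕ) (h : ℝ → F), ContDiff ℝ (⊤ : ℕ∞) h → MyFlat h m →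
    ∀ C : ℝ, (∀ t, |t| ≤ 1 → ‖iteratedDeriv (m + 1) h t‖ ≤ C) →
    ∀ t, |t| ≤ 1 → ‖h t‖ ≤ C * |t| ^ (m + 1) := by
  intro m
  induction m with
  | zero =>
    intro h hsm hfl C hC t ht
    have h0 : h 0 = 0 := by simpa using hfl 0 le_rfl
    have key := (convex_Icc (-1 : ℝ) 1).norm_image_sub_le_of_norm_hasDerivWithin_le
      (f := h) (f' := deriv h)
      (fun x _ => (mySmooth_diff hsm x).hasDerivAt.hasDerivWithinAt)
      (fun x hx => by
        have : |x| ≤ 1 := abs_le.mpr ⟨hx.1, hx.2⟩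
        simpa [iteratedDeriv_one] using hC x this)
      (Set.mem_Icc.mpr ⟨by norm_num, by norm_num⟩ : (0:ℝ) ∈ Set.Icc (-1:ℝ) 1)
      (Set.mem_Icc.mpr ⟨by linarith [neg_abs_le t, abs_nonneg t],
        by linarith [le_abs_self t]⟩ : t ∈ Set.Icc (-1:ℝ) 1)
    rw [h0, sub_zero, sub_zero, Real.norm_eq_abs] at key
    simpa [pow_one] using key
  | succ m ih =>
    intro h hsm hfl C hC t ht
    have hC0 : 0 ≤ C := le_trans (norm_nonneg _) (hC 0 (by simp))
    have hd : ∀ s : ℝ, |s| ≤ 1 → ‖deriv h s‖ ≤ C * |s| ^ (m + 1) := by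
      refine ih (deriv h) (mySmooth_deriv hsm) hfl.derivFlat C ?_
      intro s hs
      have : iteratedDeriv (m + 1) (deriv h) = iteratedDeriv (m + 2) h :=
        (iteratedDeriv_succ').symm
      rw [this]; exact hC s hs
    have h0 : h 0 = 0 := by simpa using hfl 0 (by omega)
    have key := (convex_uIcc (0 : ℝ) t).norm_image_sub_le_of_norm_hasDerivWithin_le
      (f := h) (f' := deriv h)
      (fun x _ => (mySmooth_diff hsm x).hasDerivAt.hasDerivWithinAt)
      (fun x hx => by
        have hxt : |x| ≤ |t| := by
          rcases Set.mem_uIcc.mp hx with ⟨h1, h2⟩ | ⟨h1, h2⟩ <;> rw [abs_le] <;>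
            constructor <;> linarith [neg_abs_le t, le_abs_self t, abs_nonneg t]
        calc ‖deriv h x‖ ≤ C * |x| ^ (m + 1) := hd x (hxt.trans ht)
          _ ≤ C * |t| ^ (m + 1) :=
            mul_le_mul_of_nonneg_left (pow_le_pow_left₀ (abs_nonneg x) hxt _) hC0)
      (Set.left_mem_uIcc) (Set.right_mem_uIcc)
    rw [h0, sub_zero, sub_zero, Real.norm_eq_abs] at key
    calc ‖h t‖ ≤ C * |t| ^ (m + 1) * |t| := key
      _ = C * |t| ^ (m + 2) := by ring

end Aux

theorem stmt8 {d M : ℕ} (hd : 1 ≤ d) (hM : 1 ≤ M)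
    (U V : ℝ → Matrix (Fin d) (Fin d) ℂ)
    (hU : ContDiff ℝ (⊤ : ℕ∞) U) (hV : ContDiff ℝ (⊤ : ℕ∞) V)
    (hUuni : ∀ t, U t ∈ Matrix.unitaryGroup (Fin d) ℂ)
    (hU0 : U 0 = 1)
    (hUsym : ∀ t, (U t)ᴴ = U (-t)) (hVsym : ∀ t, (V t)ᴴ = V (-t))
    (hE : ∀ n ≤ 2 * M, iteratedDeriv n (fun t => V t - U t) 0 = 0) :
    (∀ n ≤ 2 * M + 1, iteratedDeriv n (fun t => (V t)ᴴ * V t - 1) 0 = 0) ∧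
    ∃ C > (0 : ℝ), ∃ δ₀ > (0 : ℝ), ∀ t : ℝ, |t| ≤ δ₀ →
      ‖(V t)ᴴ * V t - 1‖ ≤ C * |t| ^ (2 * M + 2) := by
  have hU' : ContDiff ℝ (⊤ : ℕ∞) U := hU.of_le (by simp)
  have hV' : ContDiff ℝ (⊤ : ℕ∞) V := hV.of_le (by simp)
  set E : ℝ → Matrix (Fin d) (Fin d) ℂ := fun t => V t - U t with hEdef
  have hEsm : ContDiff ℝ (⊤ : ℕ∞) E := hV'.sub hU'
  have hEfl : MyFlat E (2 * M) := hE
  have hE0 : E 0 = 0 := by simpa using hE 0 (by omega)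
  have hpow : ((-1 : ℝ)) ^ (2 * M) = 1 := by rw [pow_mul]; norm_num
  have hWeq : (fun t => (V t)ᴴ * V t - 1) =
      fun t => (U (-t) * E t + ((-1 : ℝ) ^ (2 * M)) • (E (-t) * U t)) + E (-t) * E t := by
    funext t
    have h2 : U (-t) * U t = 1 := by
      rw [← hUsym t]
      simpa [Matrix.star_eq_conjTranspose] using (Matrix.mem_unitaryGroup_iff'.mp (hUuni t))
    rw [hVsym t, hpow, one_smul, hEdef]
    rw [← h2]
    noncomm_ring
  have hfl1 : MyFlat (fun t => U (-t) * E t + ((-1 : ℝ) ^ (2 * M)) • (E (-t) * U t))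
      (2 * M + 1) :=
    myKey (2 * M) (mySmooth_comp_neg hU') hU' hEsm (by simp [hU0]) hU0 hEfl
  have hfl2 : MyFlat (fun t => E (-t) * E t) (2 * M + 1) :=
    MyFlat.mul_flat (mySmooth_comp_neg hEsm) hEsm hEfl.comp_neg hE0
  have hs1 : ContDiff ℝ (⊤ : ℕ∞)
      (fun t => U (-t) * E t + ((-1 : ℝ) ^ (2 * M)) • (E (-t) * U t)) :=
    ((mySmooth_comp_neg hU').mul hEsm).add
      (((mySmooth_comp_neg hEsm).mul hU').const_smul _)
  have hs2 : ContDiff ℝ (⊤ : ℕ∞) (fun t => E (-t) * E t) :=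
    (mySmooth_comp_neg hEsm).mul hEsm
  have hWfl : MyFlat (fun t => (V t)ᴴ * V t - 1) (2 * M + 1) := by
    rw [hWeq]; exact hfl1.add hs1 hs2 hfl2
  refine ⟨hWfl, ?_⟩
  have hWsm : ContDiff ℝ (⊤ : ℕ∞) (fun t => (V t)ᴴ * V t - 1) := by
    rw [hWeq]; exact hs1.add hs2
  have hWsmω : ContDiff ℝ (⊤ : ℕ∞) (fun t => (V t)ᴴ * V t - 1) := by
    rw [hWeq]
    exact (((hU.comp contDiff_id.neg).mul (hV.sub hU)).add
      ((((hV.comp contDiff_id.neg).sub (hU.comp contDiff_id.neg)).mul hU).const_smul ((-1 : ℝ) ^ (2 * M)))).add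
      (((hV.comp contDiff_id.neg).sub (hU.comp contDiff_id.neg)).mul (hV.sub hU))
  obtain ⟨C₀, hC₀⟩ := (isCompact_Icc (a := (-1:ℝ)) (b := 1)).exists_bound_of_continuousOn
    ((hWsmω.continuous_iteratedDeriv (2 * M + 2) (WithTop.coe_le_coe.mpr le_top)).continuousOn)
  refine ⟨max C₀ 1, by positivity, 1, one_pos, fun t ht => ?_⟩
  have := myTaylorBound (2 * M + 1) (fun t => (V t)ᴴ * V t - 1) hWsm hWfl (max C₀ 1)
    (fun s hs => le_trans (hC₀ s (Set.mem_Icc.mpr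
      ⟨by linarith [neg_abs_le s, abs_nonneg s], by linarith [le_abs_self s]⟩))
      (le_max_left _ _)) t ht
  simpa using this
end

section
/- Let d ≥ 1, let H : ℝ → M_d(ℂ) be infinitely differentiable with H(t) Hermitian for every t, let t₀ ∈ ℝ and Δt > 0, let U be the propagator generated by H, and let Λ be a Λ-bound for H on I = [t₀, t₀+Δt]. For M ≥ 1, define the Taylor remainder 𝓡_{2M}(t₀+Δt, t₀) := U(t₀+Δt, t₀) − Σ_{n=0}^{2M} (Δt^n/n!)·[∂_δ^n U(t₀+δ, t₀)]_{δ=0}. Then ‖𝓡_{2M}(t₀+Δt, t₀)‖ < (1/(2·√(π·M)))·(2·max_{τ∈I} Λ(τ)·Δt)^{2M+1}. -/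
open scoped Matrix.Norms.L2Operator
open Matrix

section Aux

open Set
open scoped Nat

theorem myIterWithin_eq {E : Type*} [NormedAddCommGroup E] [NormedSpace ℝ E]
    {f : ℝ → E} {s : Set ℝ} (hs : UniqueDiffOn ℝ s) {n : ℕ} (hf : ContDiff ℝ n f)
    {x : ℝ} (hx : x ∈ s) : iteratedDerivWithin n f s x = iteratedDeriv n f x := by
  induction n generalizing x with
  | zero => simp
  | succ n IH =>
    rw [iteratedDerivWithin_succ, iteratedDeriv_succ]
    rw [derivWithin_congr (fun y hy => IH hf.of_succ hy) (IH hf.of_succ hx)]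
    exact ((hf.differentiable_iteratedDeriv n
      (by exact_mod_cast n.lt_succ_self)).differentiableAt.hasDerivAt.hasDerivWithinAt).derivWithin
      (hs.uniqueDiffWithinAt hx)

theorem myTaylorBound_s10 {E : Type*} [NormedAddCommGroup E] [NormedSpace ℝ E]
    {f : ℝ → E} {a b C : ℝ} {n : ℕ} (hab : a < b)
    (hf : ContDiffOn ℝ (n + 1) f (Icc a b))
    (hC : ∀ y ∈ Icc a b, ‖iteratedDerivWithin (n + 1) f (Icc a b) y‖ ≤ C) :
    ‖f b - taylorWithinEval f n (Icc a b) a b‖ ≤ C * (b - a) ^ (n + 1) / (n + 1) ! := by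
  have hC0 : 0 ≤ C := le_trans (norm_nonneg _) (hC a ⟨le_rfl, hab.le⟩)
  set s := Icc a b with hs
  have hunique : UniqueDiffOn ℝ s := uniqueDiffOn_Icc hab
  have hdiffOn : DifferentiableOn ℝ (iteratedDerivWithin n f s) s :=
    hf.differentiableOn_iteratedDerivWithin (by exact_mod_cast n.lt_succ_self) hunique
  set F : ℝ → E := fun y => taylorWithinEval f n s y b - taylorWithinEval f n s a b with hF
  set B : ℝ → ℝ := fun y => C / (n + 1) ! * ((b - a) ^ (n + 1) - (b - y) ^ (n + 1)) with hB
  set B' : ℝ → ℝ := fun y => C / (n + 1) ! * ((n + 1) * (b - y) ^ n) with hB'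
  have hBderiv : ∀ y : ℝ, HasDerivAt B (B' y) y := by
    intro y
    have h1 : HasDerivAt (fun y : ℝ => (b - y) ^ (n + 1))
        ((n + 1 : ℕ) * (b - y) ^ n * (-1)) y := by
      simpa using (((hasDerivAt_id y).const_sub b).fun_pow (n + 1))
    have h2 := (h1.const_sub ((b - a) ^ (n + 1))).const_mul (C / (n + 1) !)
    refine h2.congr_deriv ?_
    push_cast
    ring
  have hFderiv : ∀ y ∈ Ico a b, HasDerivWithinAt F
      (((n ! : ℝ)⁻¹ * (b - y) ^ n) • iteratedDerivWithin (n + 1) f s y) (Ici y) y := by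
    intro y hy
    have h := hasDerivWithinAt_taylorWithinEval_at_Icc b hab (Ico_subset_Icc_self hy)
      hf.of_succ hdiffOn
    exact ((h.mono_of_mem_nhdsWithin (Icc_mem_nhdsGE_of_mem hy)).sub_const _)
  have hbound : ∀ y ∈ Ico a b,
      ‖((n ! : ℝ)⁻¹ * (b - y) ^ n) • iteratedDerivWithin (n + 1) f s y‖ ≤ B' y := by
    intro y hy
    rw [norm_smul, Real.norm_eq_abs]
    have hby : 0 ≤ b - y := by linarith [hy.2]
    have habs : |(n ! : ℝ)⁻¹ * (b - y) ^ n| = (n ! : ℝ)⁻¹ * (b - y) ^ n := by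
      rw [abs_of_nonneg]; positivity
    rw [habs, hB']
    have key : (n ! : ℝ)⁻¹ * (b - y) ^ n * C = C / (n + 1) ! * ((n + 1) * (b - y) ^ n) := by
      rw [Nat.factorial_succ]
      push_cast
      field_simp
    calc (n ! : ℝ)⁻¹ * (b - y) ^ n * ‖iteratedDerivWithin (n + 1) f s y‖
        ≤ (n ! : ℝ)⁻¹ * (b - y) ^ n * C := by
          gcongr
          exact hC y (Ico_subset_Icc_self hy)
      _ = C / (n + 1) ! * ((n + 1) * (b - y) ^ n) := key
  have hFcont : ContinuousOn F s :=
    (continuousOn_taylorWithinEval hunique hf.of_succ).sub continuousOn_const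
  have hmain := image_norm_le_of_norm_deriv_right_le_deriv_boundary hFcont hFderiv
    (by simp [hF, hB]) hBderiv hbound (right_mem_Icc.2 hab.le)
  have hFb : F b = f b - taylorWithinEval f n s a b := by
    simp [hF, taylorWithinEval_self]
  have hBb : B b = C * (b - a) ^ (n + 1) / (n + 1) ! := by
    simp [hB]; ring
  rw [hFb, hBb] at hmain
  exact hmain

end Aux

/-- The propagator generated by the Hamiltonian `H`: `i ∂ₜ U(t,t₀) = H(t) U(t,t₀)`,
`U(t₀,t₀) = 1`. -/
def IsPropagator {d : ℕ} (H : ℝ → Matrix (Fin d) (Fin d) ℂ)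
    (U : ℝ → ℝ → Matrix (Fin d) (Fin d) ℂ) : Prop :=
  (∀ t₀ : ℝ, U t₀ t₀ = 1) ∧
    ∀ t₀ t : ℝ, HasDerivAt (fun s => U s t₀) ((-Complex.I) • (H t * U t t₀)) t

/-- `Λ` is a Λ-bound for `H` on the set `s`. -/
def IsLambdaBound {d : ℕ} (H : ℝ → Matrix (Fin d) (Fin d) ℂ) (Λ : ℝ → ℝ)
    (s : Set ℝ) : Prop :=
  ContinuousOn Λ s ∧ ∀ t ∈ s, 0 < Λ t ∧ ∀ j : ℕ, ‖iteratedDeriv j H t‖ ≤ Λ t ^ (j + 1)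

theorem prop_norm_le {d : ℕ} (H : ℝ → Matrix (Fin d) (Fin d) ℂ)
    (U : ℝ → ℝ → Matrix (Fin d) (Fin d) ℂ)
    (hHerm : ∀ t, (H t).IsHermitian) (hU : IsPropagator H U)
    (t₀ s : ℝ) : ‖U s t₀‖ ≤ 1 := by
  have hconst : ∀ s : ℝ, star (U s t₀) * U s t₀ = 1 := by
    have hd : ∀ s : ℝ, HasDerivAt (fun s => star (U s t₀) * U s t₀) 0 s := by
      intro s
      have h1 := (hU.2 t₀ s).star.mul (hU.2 t₀ s)
      refine h1.congr_deriv ?_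
      rw [star_smul, StarMul.star_mul]
      have hH : star (H s) = H s := (hHerm s).eq
      rw [hH]
      simp only [star_neg, Complex.star_def, Complex.conj_I, neg_neg, smul_mul_assoc,
        mul_smul_comm, ← mul_assoc]
      rw [← add_smul]
      simp
    have := is_const_of_deriv_eq_zero (fun s => (hd s).differentiableAt)
      (fun s => (hd s).deriv)
    intro s
    rw [this s t₀, hU.1 t₀]
    simp
  have hsq : ‖U s t₀‖ * ‖U s t₀‖ = ‖(1 : Matrix (Fin d) (Fin d) ℂ)‖ := by
    rw [← Matrix.l2_opNorm_conjTranspose_mul_self]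
    rw [← Matrix.star_eq_conjTranspose, hconst s]
  have hone : ‖(1 : Matrix (Fin d) (Fin d) ℂ)‖ ≤ 1 := by
    have h1 : ‖(1 : Matrix (Fin d) (Fin d) ℂ)‖ * ‖(1 : Matrix (Fin d) (Fin d) ℂ)‖
        = ‖(1 : Matrix (Fin d) (Fin d) ℂ)‖ := by
      have := Matrix.l2_opNorm_conjTranspose_mul_self (1 : Matrix (Fin d) (Fin d) ℂ)
      rw [conjTranspose_one, one_mul] at this
      linarith [this]
    nlinarith [norm_nonneg (1 : Matrix (Fin d) (Fin d) ℂ)]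
  nlinarith [norm_nonneg (U s t₀)]

theorem stmt10 {d : ℕ} (hd : 1 ≤ d) (H : ℝ → Matrix (Fin d) (Fin d) ℂ)
    (hH : ContDiff ℝ (⊤ : ℕ∞) H) (hHerm : ∀ t, (H t).IsHermitian)
    (U : ℝ → ℝ → Matrix (Fin d) (Fin d) ℂ) (hU : IsPropagator H U)
    (t₀ Δt : ℝ) (hΔt : 0 < Δt)
    (Λ : ℝ → ℝ) (hΛ : IsLambdaBound H Λ (Set.Icc t₀ (t₀ + Δt)))
    (Λmax : ℝ) (hmax : IsGreatest (Λ '' Set.Icc t₀ (t₀ + Δt)) Λmax)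
    (M : ℕ) (hM : 1 ≤ M) :
    ‖U (t₀ + Δt) t₀ -
        ∑ n ∈ Finset.range (2 * M + 1),
          ((Δt ^ n / n.factorial : ℝ)) • iteratedDeriv n (fun δ => U (t₀ + δ) t₀) 0‖ <
      (1 / (2 * Real.sqrt (Real.pi * M))) * (2 * Λmax * Δt) ^ (2 * M + 1) := by
  -- basic facts about Λmax
  obtain ⟨⟨τ, hτ, hτeq⟩, hub⟩ := hmax
  have hΛmax_pos : 0 < Λmax := hτeq ▸ (hΛ.2 τ hτ).1
  have hΛle : ∀ t ∈ Set.Icc t₀ (t₀ + Δt), Λ t ≤ Λmax := fun t ht => hub ⟨t, ht, rfl⟩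
  -- the function f and the coefficient B
  set f : ℝ → Matrix (Fin d) (Fin d) ℂ := fun δ => U (t₀ + δ) t₀ with hfdef
  set B : ℝ → Matrix (Fin d) (Fin d) ℂ :=
    (-Complex.I) • (fun δ => H (t₀ + δ)) with hBdef
  have hf' : ∀ δ : ℝ, HasDerivAt f (B δ * f δ) δ := by
    intro δ
    have h1 := hU.2 t₀ (t₀ + δ)
    have h2 : HasDerivAt (fun δ : ℝ => t₀ + δ) 1 δ := by
      simpa using (hasDerivAt_id δ).const_add t₀
    have h3 := HasDerivAt.scomp δ h1 h2
    simp only [one_smul] at h3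
    refine h3.congr_deriv ?_
    simp [hBdef, hfdef, smul_mul_assoc]
  have hHshift : ∀ n : ℕ, ContDiff ℝ n (fun δ : ℝ => H (t₀ + δ)) := by
    intro n
    exact (hH.of_le (by exact_mod_cast le_top)).comp ((contDiff_const.add contDiff_id))
  have hBsmooth : ∀ n : ℕ, ContDiff ℝ n B := by
    intro n
    exact (hHshift n).const_smul (-Complex.I)
  have hfsmooth : ∀ n : ℕ, ContDiff ℝ n f := by
    intro n
    induction n with
    | zero =>
      rw [show ((0 : ℕ) : WithTop ℕ∞) = 0 by rfl, contDiff_zero]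
      exact Differentiable.continuous fun δ => (hf' δ).differentiableAt
    | succ n IH =>
      rw [show ((n + 1 : ℕ) : WithTop ℕ∞) = (n : WithTop ℕ∞) + 1 by push_cast; rfl,
        contDiff_succ_iff_deriv]
      refine ⟨fun δ => (hf' δ).differentiableAt, ?_, ?_⟩
      · intro h; exact absurd h (by simp)
      · have : deriv f = fun δ => B δ * f δ := funext fun δ => (hf' δ).deriv
        rw [this]
        exact (hBsmooth n).mul IH
  -- bound on iterated derivatives of B
  have hBbound : ∀ (j : ℕ) (δ : ℝ), δ ∈ Set.Icc (0:ℝ) Δt →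
      ‖iteratedDeriv j B δ‖ ≤ Λmax ^ (j + 1) := by
    intro j δ hδ
    have ht : t₀ + δ ∈ Set.Icc t₀ (t₀ + Δt) := ⟨by linarith [hδ.1], by linarith [hδ.2]⟩
    have h1 : iteratedDeriv j B δ
        = (-Complex.I) • iteratedDeriv j (fun δ => H (t₀ + δ)) δ := by
      simp only [← iteratedDerivWithin_univ]
      exact iteratedDerivWithin_const_smul (Set.mem_univ δ) uniqueDiffOn_univ (-Complex.I)
        (hHshift j).contDiffWithinAt
    rw [h1, iteratedDeriv_comp_const_add, norm_smul]
    simp only [norm_neg, Complex.norm_I, one_mul]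
    calc ‖iteratedDeriv j H (t₀ + δ)‖ ≤ Λ (t₀ + δ) ^ (j + 1) := (hΛ.2 _ ht).2 j
      _ ≤ Λmax ^ (j + 1) := by
          gcongr
          · exact le_of_lt (hΛ.2 _ ht).1
          · exact hΛle _ ht
  -- main bound on iterated derivatives of f
  have hfb : ∀ n : ℕ, ∀ δ ∈ Set.Icc (0:ℝ) Δt,
      ‖iteratedDeriv n f δ‖ ≤ (n.factorial : ℝ) * Λmax ^ n := by
    intro n
    induction n using Nat.strong_induction_on with
    | _ n IH =>
      cases n with
      | zero =>
        intro δ hδ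
        simpa using prop_norm_le H U hHerm hU t₀ (t₀ + δ)
      | succ n =>
        intro δ hδ
        have hde : deriv f = fun δ => B δ * f δ := funext fun δ => (hf' δ).deriv
        rw [iteratedDeriv_succ', hde]
        calc ‖iteratedDeriv n (fun δ => B δ * f δ) δ‖
            = ‖iteratedFDeriv ℝ n (fun δ => B δ * f δ) δ‖ :=
              (norm_iteratedFDeriv_eq_norm_iteratedDeriv).symm
          _ ≤ ∑ i ∈ Finset.range (n + 1), (n.choose i : ℝ) * ‖iteratedFDeriv ℝ i B δ‖ *
                ‖iteratedFDeriv ℝ (n - i) f δ‖ :=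
              norm_iteratedFDeriv_mul_le (hBsmooth n) (hfsmooth n) δ le_rfl
          _ ≤ ∑ _i ∈ Finset.range (n + 1), (n.factorial : ℝ) * Λmax ^ (n + 1) := by
              apply Finset.sum_le_sum
              intro i hi
              have hi' : i ≤ n := Nat.lt_succ_iff.mp (Finset.mem_range.mp hi)
              have h1 : ‖iteratedFDeriv ℝ i B δ‖ ≤ Λmax ^ (i + 1) := by
                rw [norm_iteratedFDeriv_eq_norm_iteratedDeriv]; exact hBbound i δ hδ
              have h2 : ‖iteratedFDeriv ℝ (n - i) f δ‖
                  ≤ ((n - i).factorial : ℝ) * Λmax ^ (n - i) := by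
                rw [norm_iteratedFDeriv_eq_norm_iteratedDeriv]
                exact IH (n - i) (by omega) δ hδ
              have hexp : Λmax ^ (i + 1) * Λmax ^ (n - i) = Λmax ^ (n + 1) := by
                rw [← pow_add]; congr 1; omega
              have hnat : (n.choose i) * (n - i).factorial ≤ n.factorial := by
                calc (n.choose i) * (n - i).factorial
                    ≤ (n.choose i) * i.factorial * (n - i).factorial :=
                      Nat.mul_le_mul_right _ (Nat.le_mul_of_pos_right _ (Nat.factorial_pos i))
                  _ = n.factorial := Nat.choose_mul_factorial_mul_factorial hi'
              calc (n.choose i : ℝ) * ‖iteratedFDeriv ℝ i B δ‖ * ‖iteratedFDeriv ℝ (n - i) f δ‖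
                  ≤ (n.choose i : ℝ) * Λmax ^ (i + 1) * (((n - i).factorial : ℝ) * Λmax ^ (n - i)) := by
                    have hA : (n.choose i : ℝ) * ‖iteratedFDeriv ℝ i B δ‖
                        ≤ (n.choose i : ℝ) * Λmax ^ (i + 1) :=
                      mul_le_mul_of_nonneg_left h1 (by positivity)
                    exact mul_le_mul hA h2 (norm_nonneg _)
                      (mul_nonneg (by positivity) (pow_nonneg hΛmax_pos.le _))
                  _ = ((n.choose i : ℝ) * ((n - i).factorial : ℝ)) *
                        (Λmax ^ (i + 1) * Λmax ^ (n - i)) := by ring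
                  _ ≤ (n.factorial : ℝ) * Λmax ^ (n + 1) := by
                    rw [hexp]
                    gcongr
                    exact_mod_cast hnat
          _ = ((n + 1).factorial : ℝ) * Λmax ^ (n + 1) := by
              rw [Finset.sum_const, Finset.card_range, nsmul_eq_mul, Nat.factorial_succ]
              push_cast
              ring
  -- Taylor's theorem
  have hud : UniqueDiffOn ℝ (Set.Icc (0:ℝ) Δt) := uniqueDiffOn_Icc hΔt
  have hIcc0 : (0:ℝ) ∈ Set.Icc (0:ℝ) Δt := ⟨le_rfl, hΔt.le⟩
  have hCbound : ∀ y ∈ Set.Icc (0:ℝ) Δt,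
      ‖iteratedDerivWithin (2 * M + 1) f (Set.Icc (0:ℝ) Δt) y‖
        ≤ ((2 * M + 1).factorial : ℝ) * Λmax ^ (2 * M + 1) := by
    intro y hy
    rw [myIterWithin_eq hud (hfsmooth (2 * M + 1)) hy]
    exact hfb (2 * M + 1) y hy
  have htay := myTaylorBound_s10 (n := 2 * M) hΔt
    (by exact_mod_cast (hfsmooth (2 * M + 1)).contDiffOn) hCbound
  have hsum : taylorWithinEval f (2 * M) (Set.Icc (0:ℝ) Δt) 0 Δt
      = ∑ n ∈ Finset.range (2 * M + 1),
          ((Δt ^ n / n.factorial : ℝ)) • iteratedDeriv n f 0 := by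
    rw [taylor_within_apply]
    refine Finset.sum_congr rfl fun k hk => ?_
    rw [myIterWithin_eq hud (hfsmooth k) hIcc0]
    congr 1
    rw [sub_zero, div_eq_mul_inv, mul_comm]
  have hUf : U (t₀ + Δt) t₀ = f Δt := rfl
  have hfinal : (((2 * M + 1).factorial : ℝ) * Λmax ^ (2 * M + 1)) * (Δt - 0) ^ (2 * M + 1)
      / ((2 * M + 1).factorial : ℝ) = (Λmax * Δt) ^ (2 * M + 1) := by
    rw [sub_zero, mul_pow]
    field_simp
  rw [hUf, ← hsum]
  refine lt_of_le_of_lt (le_trans htay (le_of_eq hfinal)) ?_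
  -- final arithmetic
  have hMpos : (0:ℝ) < M := by exact_mod_cast lt_of_lt_of_le one_pos hM
  have hs : 0 < Real.sqrt (Real.pi * M) := Real.sqrt_pos.mpr (by positivity)
  have hsqrt : Real.sqrt (Real.pi * M) < 4 ^ M := by
    rw [Real.sqrt_lt' (by positivity)]
    have h1 : (M : ℝ) ≤ 4 ^ M := by
      calc (M : ℝ) ≤ 2 ^ M := by exact_mod_cast (Nat.lt_two_pow_self (n := M)).le
        _ ≤ 4 ^ M := by gcongr <;> norm_num
    have h2 : (4 : ℝ) ≤ 4 ^ M := by
      calc (4:ℝ) = 4 ^ 1 := by norm_num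
        _ ≤ 4 ^ M := pow_le_pow_right₀ (by norm_num) hM
    nlinarith [Real.pi_lt_d2]
  have hP : (0:ℝ) < (Λmax * Δt) ^ (2 * M + 1) := by positivity
  have hexpand : (2 * Λmax * Δt) ^ (2 * M + 1)
      = 2 * 4 ^ M * (Λmax * Δt) ^ (2 * M + 1) := by
    rw [show (2 * Λmax * Δt) = 2 * (Λmax * Δt) by ring, mul_pow]
    congr 1
    rw [pow_succ, pow_mul]
    norm_num
    ring
  rw [hexpand, one_div, ← div_eq_inv_mul, lt_div_iff₀ (by positivity)]
  nlinarith [mul_lt_mul_of_pos_left hsqrt hP]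
end

section
/- Let d ≥ 1, n ≥ 1, let H : ℝ → M_d(ℂ) be (n−1)-times continuously differentiable with H(t) Hermitian for every t, and let U be the propagator generated by H. Fix t₀ ∈ ℝ and t ∈ ℝ, and suppose λ > 0 satisfies ‖H^{(j)}(t)‖ ≤ λ^{j+1} for all 0 ≤ j ≤ n−1. Then ‖∂_t^n U(t, t₀)‖ ≤ λ^n·b_n, where b_n is the n-th Bell number. -/
open scoped Matrix.Norms.L2Operator
open Matrix

/-- The complete exponential Bell polynomial `Y_n(x₁,…,xₙ)` (with `x i` the `i`-th argument,
`1 ≤ i ≤ n`): the sum over all tuples `(c₁,…,cₙ)` of nonnegative integers with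
`c₁ + 2c₂ + ⋯ + n·cₙ = n` of `n!/(c₁!⋯cₙ!)·∏ⱼ (xⱼ/j!)^{cⱼ}`. -/
noncomputable def bellY (n : ℕ) (x : ℕ → ℝ) : ℝ :=
  ∑ c ∈ Finset.univ.filter
      (fun c : Fin n → Fin (n + 1) => ∑ j : Fin n, ((j : ℕ) + 1) * (c j : ℕ) = n),
    ((n.factorial : ℝ) / ∏ j : Fin n, ((c j : ℕ).factorial : ℝ)) *
      ∏ j : Fin n, (x ((j : ℕ) + 1) / (((j : ℕ) + 1).factorial : ℝ)) ^ ((c j : ℕ))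

/-!
Differentiating `U' = -i H U` repeatedly and applying the Leibniz rule gives
`U⁽ᵐ⁺¹⁾ = -i ∑ₖ (m choose k) H⁽ᵏ⁾ U⁽ᵐ⁻ᵏ⁾`. Since `U` is unitary, `‖U‖ ≤ 1`, so by induction
`‖U⁽ᵐ⁾‖ ≤ λᵐ Bₘ` where `B` satisfies `B₀ = 1`, `Bₘ₊₁ = ∑ₖ (m choose k) Bₘ₋ₖ`: the Bell numbers.
Finally `Yₙ(1,…,1)` is the Bell number because its summands, indexed by the block-size
multiplicities of a set partition, count the set partitions of that type.
-/

open Finset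

namespace Nat.Partition

variable {n : ℕ}

@[to_additive]
theorem prod_toFinset_parts_eq_prod_fin {M : Type*} [CommMonoid M] (p : n.Partition)
    (f : ℕ → M) (hf : ∀ k ∉ p.parts, f k = 1) :
    ∏ k ∈ p.parts.toFinset, f k = ∏ j : Fin n, f (j + 1) := by
  rw [← prod_image (s := univ) (g := fun j : Fin n => (j : ℕ) + 1)
    (fun a _ b _ h => Fin.ext (by simpa using h))]
  refine prod_subset (fun k hk => ?_) (fun k _ hk => hf k (by simpa using hk))
  rw [Multiset.mem_toFinset] at hk
  have hpos := p.parts_pos hk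
  have hle := p.le_of_mem_parts hk
  exact mem_image.mpr ⟨⟨k - 1, by omega⟩, mem_univ _, Nat.sub_add_cancel hpos⟩

theorem count_parts_lt_succ (p : n.Partition) (k : ℕ) : p.parts.count k < n + 1 :=
  Nat.lt_succ_of_le <| calc
    p.parts.count k ≤ Multiset.card p.parts := Multiset.count_le_card k p.parts
    _ ≤ n := by
      simpa [p.parts_sum] using Multiset.card_nsmul_le_sum (a := 1) fun x hx => p.parts_pos hx

def multiplicities (p : n.Partition) (j : Fin n) : Fin (n + 1) :=
  ⟨p.parts.count ((j : ℕ) + 1), p.count_parts_lt_succ _⟩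

theorem sum_mul_multiplicities (p : n.Partition) :
    ∑ j : Fin n, ((j : ℕ) + 1) * (p.multiplicities j : ℕ) = n := by
  conv_rhs => rw [← p.parts_sum, Finset.sum_multiset_count,
    p.sum_toFinset_parts_eq_sum_fin _ (fun k hk => by simp [Multiset.count_eq_zero_of_notMem hk])]
  simp [multiplicities, mul_comm]

theorem sum_multiplicities_nsmul (p : n.Partition) :
    ∑ j : Fin n, (p.multiplicities j : ℕ) • ({(j : ℕ) + 1} : Multiset ℕ) = p.parts := by
  conv_rhs => rw [← Multiset.toFinset_sum_count_nsmul_eq p.parts,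
    p.sum_toFinset_parts_eq_sum_fin _ (fun k hk => by simp [Multiset.count_eq_zero_of_notMem hk])]
  rfl

def ofMultiplicities (c : Fin n → ℕ) (hc : ∑ j : Fin n, ((j : ℕ) + 1) * c j = n) :
    n.Partition :=
  ofSums n (∑ j : Fin n, c j • {(j : ℕ) + 1})
    (by simpa [Multiset.sum_sum, Multiset.sum_nsmul, mul_comm] using hc)

theorem count_ofMultiplicities (c : Fin n → ℕ) (hc : ∑ j : Fin n, ((j : ℕ) + 1) * c j = n)
    (j : Fin n) : (ofMultiplicities c hc).parts.count ((j : ℕ) + 1) = c j := by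
  simp [ofMultiplicities, Multiset.count_sum', Multiset.count_singleton, Fin.val_inj]

theorem ofMultiplicities_multiplicities (p : n.Partition) :
    ofMultiplicities (fun j => p.multiplicities j) p.sum_mul_multiplicities = p := by
  ext1
  rw [ofMultiplicities, ofSums_parts, p.sum_multiplicities_nsmul, Multiset.filter_eq_self]
  exact fun k hk => (p.parts_pos hk).ne'

theorem bell_mul_prod_multiplicities (p : n.Partition) :
    p.parts.bell * ∏ j : Fin n,
      (((j : ℕ) + 1)! ^ (p.multiplicities j : ℕ) * (p.multiplicities j : ℕ)!) = n ! := by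
  have hzero : 0 ∉ p.parts := fun h => (p.parts_pos h).ne' rfl
  conv_rhs => rw [← p.parts_sum, ← Multiset.bell_mul_eq]
  rw [Finset.prod_mul_distrib, ← mul_assoc,
    Finset.prod_multiset_map_count, Finset.erase_eq_of_notMem (by simpa using hzero),
    p.prod_toFinset_parts_eq_prod_fin _ (fun k hk => by simp [Multiset.count_eq_zero_of_notMem hk]),
    p.prod_toFinset_parts_eq_prod_fin _ (fun k hk => by simp [Multiset.count_eq_zero_of_notMem hk])]
  rfl

end Nat.Partition

theorem bellY_one_eq_bell (n : ℕ) : bellY n (fun _ => 1) = n.bell := by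
  rw [Nat.bell_eq_sum_partition, bellY, Nat.cast_sum]
  symm
  refine sum_bij' (fun p _ => p.multiplicities) (fun c hc => .ofMultiplicities (fun j => c j)
      (mem_filter.mp hc).2) (fun p _ => mem_filter.mpr ⟨mem_univ _, p.sum_mul_multiplicities⟩)
    (fun _ _ => mem_univ _) (fun p _ => p.ofMultiplicities_multiplicities)
    (fun c _ => funext fun j => Fin.ext (Nat.Partition.count_ofMultiplicities _ _ j))
    (fun p _ => ?_)
  have h := congrArg (Nat.cast : ℕ → ℝ) p.bell_mul_prod_multiplicities
  push_cast at h
  rw [← h, prod_mul_distrib]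
  simp only [one_div, inv_pow, prod_inv_distrib]
  field_simp

theorem CStarRing.norm_le_one_of_star_mul_self_eq_one {A : Type*} [NormedRing A] [StarRing A]
    [CStarRing A] {x : A} (hx : star x * x = 1) : ‖x‖ ≤ 1 := by
  have h₁ : ‖(1 : A)‖ * ‖(1 : A)‖ = ‖(1 : A)‖ := by
    simpa using (CStarRing.norm_star_mul_self (x := (1 : A))).symm
  have hx' : ‖x‖ * ‖x‖ = ‖(1 : A)‖ := by rw [← CStarRing.norm_star_mul_self, hx]
  have h₂ : ‖(1 : A)‖ ≤ 1 := by nlinarith [norm_nonneg (1 : A)]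
  nlinarith [norm_nonneg x]

section Schrodinger

variable {A : Type*} [NormedRing A] [NormedAlgebra ℂ A] {H u : ℝ → A}

theorem contDiff_of_hasDerivAt_schrodinger (hu : ∀ s, HasDerivAt u ((-Complex.I) • (H s * u s)) s)
    {k : ℕ} (hH : ContDiff ℝ k H) : ContDiff ℝ k u := by
  have hdiff : Differentiable ℝ u := fun s => (hu s).differentiableAt
  induction k with
  | zero => exact contDiff_zero.mpr hdiff.continuous
  | succ k ih =>
    rw [Nat.cast_succ, contDiff_succ_iff_deriv]
    refine ⟨hdiff, by simp, ?_⟩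
    rw [funext fun s => (hu s).deriv]
    exact ((hH.of_le (by norm_cast; omega)).mul (ih (hH.of_le (by norm_cast; omega)))).const_smul _

theorem star_mul_self_eq_of_hasDerivAt_schrodinger [StarRing A] [CStarRing A] [StarModule ℂ A]
    (hu : ∀ s, HasDerivAt u ((-Complex.I) • (H s * u s)) s) (hH : ∀ s, IsSelfAdjoint (H s))
    (s r : ℝ) : star (u s) * u s = star (u r) * u r := by
  have hderiv (s : ℝ) : HasDerivAt (fun r => star (u r) * u r) 0 s := by
    refine ((hu s).star.mul (hu s)).congr_deriv ?_
    rw [star_smul, star_mul, (hH s).star_eq, star_neg, Complex.star_def, Complex.conj_I, neg_neg,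
      smul_mul_assoc, mul_smul_comm, ← mul_assoc, neg_smul, add_neg_cancel]
  exact is_const_of_deriv_eq_zero (fun s => (hderiv s).differentiableAt)
    (fun s => (hderiv s).deriv) s r

theorem norm_iteratedDeriv_le_pow_mul_bell_of_hasDerivAt_schrodinger
    (hu : ∀ s, HasDerivAt u ((-Complex.I) • (H s * u s)) s) {n : ℕ} (hH : ContDiff ℝ (n - 1 : ℕ) H)
    {t lam : ℝ} (hu₀ : ‖u t‖ ≤ 1) (hbound : ∀ j < n, ‖iteratedDeriv j H t‖ ≤ lam ^ (j + 1)) :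
    ‖iteratedDeriv n u t‖ ≤ lam ^ n * n.bell := by
  induction n using Nat.strong_induction_on with
  | _ n ih =>
  rcases n with _ | m
  · simpa using hu₀
  have hHm : ContDiff ℝ m H := by simpa using hH
  have hum : ContDiff ℝ m u := contDiff_of_hasDerivAt_schrodinger hu hHm
  have hlower (i : ℕ) (hi : i ≤ m) : ‖iteratedDeriv (m - i) u t‖ ≤ lam ^ (m - i) * (m - i).bell :=
    ih _ (by omega) (hHm.of_le (by norm_cast; omega)) fun j hj => hbound j (by omega)
  calc ‖iteratedDeriv (m + 1) u t‖ = ‖iteratedDeriv m (fun s => H s * u s) t‖ := by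
        rw [iteratedDeriv_succ', funext fun s => (hu s).deriv, iteratedDeriv_fun_const_smul_field,
          norm_smul, norm_neg, Complex.norm_I, one_mul]
    _ ≤ ∑ i ∈ Finset.range (m + 1),
          (m.choose i : ℝ) * ‖iteratedDeriv i H t‖ * ‖iteratedDeriv (m - i) u t‖ := by
        simpa only [norm_iteratedFDeriv_eq_norm_iteratedDeriv] using
          norm_iteratedFDeriv_mul_le hHm hum t le_rfl
    _ ≤ ∑ i ∈ Finset.range (m + 1),
          (m.choose i : ℝ) * lam ^ (i + 1) * (lam ^ (m - i) * (m - i).bell) := by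
        refine Finset.sum_le_sum fun i hi => ?_
        have hi : i ≤ m := Nat.lt_succ_iff.mp (Finset.mem_range.mp hi)
        have hHi := hbound i (by omega)
        gcongr
        · exact mul_nonneg (Nat.cast_nonneg _) ((norm_nonneg _).trans hHi)
        · exact hlower i hi
    _ = lam ^ (m + 1) * (m + 1).bell := by
        rw [Nat.bell_succ, ← Nat.range_succ_eq_Iic, Nat.cast_sum, Finset.mul_sum]
        refine Finset.sum_congr rfl fun i hi => ?_
        have hi : i ≤ m := Nat.lt_succ_iff.mp (Finset.mem_range.mp hi)
        rw [show m + 1 = (i + 1) + (m - i) by omega, pow_add]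
        push_cast
        ring

end Schrodinger

theorem stmt14_general {d : ℕ} (n : ℕ)
    (H : ℝ → Matrix (Fin d) (Fin d) ℂ) (hH : ContDiff ℝ (n - 1 : ℕ) H)
    (hHerm : ∀ t, (H t).IsHermitian)
    (U : ℝ → ℝ → Matrix (Fin d) (Fin d) ℂ) (hU : IsPropagator H U)
    (t₀ t : ℝ) (lam : ℝ)
    (hbound : ∀ j ≤ n - 1, ‖iteratedDeriv j H t‖ ≤ lam ^ (j + 1)) :
    ‖iteratedDeriv n (fun s => U s t₀) t‖ ≤ lam ^ n * bellY n (fun _ => 1) := by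
  have hunitary : star (U t t₀) * U t t₀ = 1 := by
    rw [star_mul_self_eq_of_hasDerivAt_schrodinger (hU.2 t₀) hHerm t t₀, hU.1 t₀, star_one,
      one_mul]
  rw [bellY_one_eq_bell]
  exact norm_iteratedDeriv_le_pow_mul_bell_of_hasDerivAt_schrodinger (hU.2 t₀) hH
    (CStarRing.norm_le_one_of_star_mul_self_eq_one hunitary) fun j hj => hbound j (by omega)

theorem stmt14 {d : ℕ} (hd : 1 ≤ d) (n : ℕ) (hn : 1 ≤ n)
    (H : ℝ → Matrix (Fin d) (Fin d) ℂ) (hH : ContDiff ℝ (n - 1 : ℕ) H)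
    (hHerm : ∀ t, (H t).IsHermitian)
    (U : ℝ → ℝ → Matrix (Fin d) (Fin d) ℂ) (hU : IsPropagator H U)
    (t₀ t : ℝ) (lam : ℝ) (hlam : 0 < lam)
    (hbound : ∀ j ≤ n - 1, ‖iteratedDeriv j H t‖ ≤ lam ^ (j + 1)) :
    ‖iteratedDeriv n (fun s => U s t₀) t‖ ≤ lam ^ n * bellY n (fun _ => 1) :=
  stmt14_general n H hH hHerm U hU t₀ t lam hbound
end

section
/- Let Λ : [t₀, t] → ℝ be differentiable with Λ(τ) > 0 for all τ, let K ≥ 0 satisfy |Λ'(τ)| ≤ K·Λ(τ)² for all τ ∈ [t₀, t], and set Λ̄ := (1/(t−t₀))·∫_{t₀}^{t} Λ(τ) dτ (with t > t₀). Assume K·(t−t₀)·Λ(t₀) < 1 and (3/2)·K·(t−t₀)·Λ̄ < 1. Then max_{τ∈[t₀,t]} Λ(τ) ≤ Λ̄/(1 − (3/2)·K·Λ̄·(t−t₀)). -/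
/-!
With `M = max Λ`, the hypothesis gives `|Λ'| ≤ K M Λ`, so `Λ` varies by at most
`K M ∫ Λ = K M Λ̄ (t - t₀)` over the interval. Comparing the maximum with the average yields
`M ≤ Λ̄ + K M Λ̄ (t - t₀)`, i.e. `M ≤ Λ̄ / (1 - K Λ̄ (t - t₀))`, which is even stronger than the claim.
-/

open MeasureTheory Set intervalIntegral

theorem sub_le_integral_of_hasDerivWithinAt_le {f f' φ : ℝ → ℝ} {a b x y : ℝ}
    (hf : ∀ τ ∈ Icc a b, HasDerivWithinAt f (f' τ) (Icc a b) τ)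
    (hφ : IntegrableOn φ (Icc a b)) (hf'φ : ∀ τ ∈ Icc a b, f' τ ≤ φ τ)
    (hx : x ∈ Icc a b) (hy : y ∈ Icc a b) (hxy : x ≤ y) :
    f y - f x ≤ ∫ τ in x..y, φ τ := by
  have hsub : Icc x y ⊆ Icc a b := Icc_subset_Icc hx.1 hy.2
  refine sub_le_integral_of_hasDeriv_right_of_le hxy
    (fun τ hτ => (hf τ (hsub hτ)).continuousWithinAt.mono hsub) (fun τ hτ => ?_)
    (hφ.mono_set hsub) (fun τ hτ => hf'φ τ (hsub (Ioo_subset_Icc_self hτ)))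
  have hτ' : τ ∈ Ioo a b := ⟨hx.1.trans_lt hτ.1, hτ.2.trans_le hy.2⟩
  exact ((hf τ (Ioo_subset_Icc_self hτ')).hasDerivAt (Icc_mem_nhds hτ'.1 hτ'.2)).hasDerivWithinAt

theorem sub_le_integral_of_abs_hasDerivWithinAt_le {f f' φ : ℝ → ℝ} {a b x y : ℝ}
    (hf : ∀ τ ∈ Icc a b, HasDerivWithinAt f (f' τ) (Icc a b) τ)
    (hφ : IntegrableOn φ (Icc a b)) (hf'φ : ∀ τ ∈ Icc a b, |f' τ| ≤ φ τ)
    (hx : x ∈ Icc a b) (hy : y ∈ Icc a b) :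
    f y - f x ≤ ∫ τ in a..b, φ τ := by
  have hφ_nonneg : 0 ≤ᵐ[volume.restrict (Ioc a b)] φ :=
    ae_restrict_of_forall_mem measurableSet_Ioc fun τ hτ =>
      (abs_nonneg _).trans (hf'φ τ (Ioc_subset_Icc_self hτ))
  have hab : a ≤ b := hx.1.trans hx.2
  have hφ' : IntervalIntegrable φ volume a b := (intervalIntegrable_iff_integrableOn_Icc_of_le hab).2 hφ
  rcases le_total x y with hxy | hyx
  · calc f y - f x ≤ ∫ τ in x..y, φ τ :=
          sub_le_integral_of_hasDerivWithinAt_le hf hφ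
            (fun τ hτ => (le_abs_self _).trans (hf'φ τ hτ)) hx hy hxy
      _ ≤ ∫ τ in a..b, φ τ := integral_mono_interval hx.1 hxy hy.2 hφ_nonneg hφ'
  · calc f y - f x = -f x - -f y := by ring
      _ ≤ ∫ τ in y..x, φ τ :=
          sub_le_integral_of_hasDerivWithinAt_le (fun τ hτ => (hf τ hτ).neg) hφ
            (fun τ hτ => (neg_le_abs _).trans (hf'φ τ hτ)) hy hx hyx
      _ ≤ ∫ τ in a..b, φ τ := integral_mono_interval hy.1 hyx hx.2 hφ_nonneg hφ'

theorem le_integral_div_add_of_forall_le_add {f : ℝ → ℝ} {a b c C : ℝ} (hab : a < b)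
    (hf : IntervalIntegrable f volume a b) (h : ∀ σ ∈ Icc a b, c ≤ f σ + C) :
    c ≤ (∫ σ in a..b, f σ) / (b - a) + C := by
  have hba : 0 < b - a := sub_pos.2 hab
  have hmono : ∫ _ in a..b, (c - C) ≤ ∫ σ in a..b, f σ :=
    integral_mono_on hab.le intervalIntegrable_const hf fun σ hσ => by linarith [h σ hσ]
  rw [intervalIntegral.integral_const, smul_eq_mul] at hmono
  rw [← sub_le_iff_le_add, le_div_iff₀ hba]
  linarith

theorem stmt16_general (t₀ t K : ℝ) (h01 : t₀ < t) (hK : 0 ≤ K) (Λ Λ' : ℝ → ℝ)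
    (hpos : ∀ τ ∈ Set.Icc t₀ t, 0 < Λ τ)
    (hderiv : ∀ τ ∈ Set.Icc t₀ t, HasDerivWithinAt Λ (Λ' τ) (Set.Icc t₀ t) τ)
    (hbound : ∀ τ ∈ Set.Icc t₀ t, |Λ' τ| ≤ K * Λ τ ^ 2)
    (h2 : 3 / 2 * K * (t - t₀) * ((∫ s in t₀..t, Λ s) / (t - t₀)) < 1) :
    ∀ τ ∈ Set.Icc t₀ t,
      Λ τ ≤ ((∫ s in t₀..t, Λ s) / (t - t₀)) /
        (1 - 3 / 2 * K * ((∫ s in t₀..t, Λ s) / (t - t₀)) * (t - t₀)) := by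
  intro τ hτ
  have hΔ : 0 < t - t₀ := sub_pos.2 h01
  have hcont : ContinuousOn Λ (Icc t₀ t) := fun σ hσ => (hderiv σ hσ).continuousWithinAt
  obtain ⟨τmax, hτmax, hmax⟩ := isCompact_Icc.exists_isMaxOn (nonempty_Icc.2 h01.le) hcont
  set M := Λ τmax
  set A := (∫ s in t₀..t, Λ s) / (t - t₀) with hA_def
  have hM : 0 ≤ M := (hpos τmax hτmax).le
  have hA : 0 ≤ A :=
    div_nonneg (integral_nonneg h01.le fun s hs => (hpos s hs).le) hΔ.le
  have hderiv_le : ∀ σ ∈ Icc t₀ t, |Λ' σ| ≤ K * M * Λ σ := fun σ hσ =>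
    (hbound σ hσ).trans <| by
      rw [sq, ← mul_assoc]
      exact mul_le_mul_of_nonneg_right (mul_le_mul_of_nonneg_left (hmax hσ) hK) (hpos σ hσ).le
  have hM_le : ∀ σ ∈ Icc t₀ t, M ≤ Λ σ + K * M * (A * (t - t₀)) := fun σ hσ => by
    have hvar : M - Λ σ ≤ K * M * ∫ s in t₀..t, Λ s := by
      simpa only [intervalIntegral.integral_const_mul] using
        sub_le_integral_of_abs_hasDerivWithinAt_le hderiv
          (hcont.integrableOn_Icc.const_mul (K * M)) hderiv_le hσ hτmax
    rwa [hA_def, div_mul_cancel₀ _ hΔ.ne', ← sub_le_iff_le_add']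
  have hMA : M ≤ A + K * M * (A * (t - t₀)) :=
    le_integral_div_add_of_forall_le_add h01 (hcont.intervalIntegrable_of_Icc h01.le) hM_le
  have hden : 0 < 1 - 3 / 2 * K * A * (t - t₀) := by linarith
  rw [le_div_iff₀ hden]
  calc Λ τ * (1 - 3 / 2 * K * A * (t - t₀)) ≤ M * (1 - 3 / 2 * K * A * (t - t₀)) :=
        mul_le_mul_of_nonneg_right (hmax hτ) hden.le
    _ ≤ A := by nlinarith [mul_nonneg (mul_nonneg hK hM) (mul_nonneg hA hΔ.le)]

theorem stmt16 (t₀ t K : ℝ) (h01 : t₀ < t) (hK : 0 ≤ K) (Λ Λ' : ℝ → ℝ)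
    (hpos : ∀ τ ∈ Set.Icc t₀ t, 0 < Λ τ)
    (hderiv : ∀ τ ∈ Set.Icc t₀ t, HasDerivWithinAt Λ (Λ' τ) (Set.Icc t₀ t) τ)
    (hbound : ∀ τ ∈ Set.Icc t₀ t, |Λ' τ| ≤ K * Λ τ ^ 2)
    (h1 : K * (t - t₀) * Λ t₀ < 1)
    (h2 : 3 / 2 * K * (t - t₀) * ((∫ s in t₀..t, Λ s) / (t - t₀)) < 1) :
    ∀ τ ∈ Set.Icc t₀ t,
      Λ τ ≤ ((∫ s in t₀..t, Λ s) / (t - t₀)) /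
        (1 - 3 / 2 * K * ((∫ s in t₀..t, Λ s) / (t - t₀)) * (t - t₀)) :=
  stmt16_general t₀ t K h01 hK Λ Λ' hpos hderiv hbound h2
end

section
/- For all integers N ≥ 2 and m with 1 ≤ m ≤ N−1, the complex number Σ_{k=0}^{N−1} (2πk/N²)·e^{2πikm/N} has modulus at most π/(2·min(m, N−m)). -/
/-!
With `ω = e^{2πim/N}` a nontrivial `N`-th root of unity, `∑ k ω^k = N / (ω - 1)`, and
`|ω - 1| = 2 sin (πm/N) ≥ 4 min(m, N - m) / N` by Jordan's inequality `sin x ≥ 2x/π` on `[0, π/2]`.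
-/

open Complex Finset
open scoped Real

theorem sub_one_mul_sum_range_natCast_mul_pow {R : Type*} [CommRing R] (x : R) (n : ℕ) :
    (x - 1) * ∑ k ∈ range n, (k : R) * x ^ k = n * x ^ n - x * ∑ k ∈ range n, x ^ k := by
  induction n with
  | zero => simp
  | succ n ih =>
    rw [sum_range_succ, sum_range_succ, mul_add, ih]
    push_cast
    ring

theorem sum_range_natCast_mul_pow_of_pow_eq_one {K : Type*} [Field K] {x : K} {n : ℕ}
    (hxn : x ^ n = 1) (hx1 : x ≠ 1) : ∑ k ∈ range n, (k : K) * x ^ k = n / (x - 1) := by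
  have hgeom : ∑ k ∈ range n, x ^ k = 0 := by rw [geom_sum_eq hx1, hxn, sub_self, zero_div]
  rw [eq_div_iff (sub_ne_zero.mpr hx1), mul_comm, sub_one_mul_sum_range_natCast_mul_pow, hxn,
    hgeom]
  ring

theorem Complex.norm_exp_two_pi_I_div_pow_sub_one {m N : ℕ} (hmN : m ≤ N) :
    ‖exp (2 * π * I / N) ^ m - 1‖ = 2 * Real.sin (π * m / N) := by
  have hexp : exp (2 * π * I / N) ^ m = exp (I * ↑(2 * π * m / N)) := by
    rw [← exp_nat_mul]; push_cast; ring_nf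
  have hsin : 0 ≤ Real.sin (π * m / N) := by
    apply Real.sin_nonneg_of_nonneg_of_le_pi (by positivity)
    rw [mul_div_assoc]
    exact mul_le_of_le_one_right Real.pi_pos.le
      (div_le_one_of_le₀ (by exact_mod_cast hmN) N.cast_nonneg)
  rw [hexp, norm_exp_I_mul_ofReal_sub_one, show 2 * π * m / N / 2 = π * m / N by ring,
    Real.norm_eq_abs, abs_of_nonneg (mul_nonneg zero_le_two hsin)]

theorem Real.two_mul_min_div_le_sin_pi_mul_div {m N : ℕ} (hmN : m < N) :
    2 * (min m (N - m) : ℕ) / N ≤ Real.sin (π * m / N) := by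
  have hN : (0 : ℝ) < N := by exact_mod_cast (by omega : 0 < N)
  set M := min m (N - m) with hM
  have hsin : Real.sin (π * m / N) = Real.sin (π * M / N) := by
    rcases le_total m (N - m) with h | h
    · rw [hM, min_eq_left h]
    · rw [hM, min_eq_right h, ← Real.sin_pi_sub, Nat.cast_sub hmN.le]
      congr 1
      field_simp
  have hMN : 2 * (M : ℝ) ≤ N := by exact_mod_cast (by omega : 2 * M ≤ N)
  have hle : π * M / N ≤ π / 2 := by
    rw [div_le_div_iff₀ hN two_pos]; nlinarith [Real.pi_pos]
  calc 2 * (M : ℝ) / N = 2 / π * (π * M / N) := by field_simp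
    _ ≤ Real.sin (π * M / N) := Real.mul_le_sin (by positivity) hle
    _ = Real.sin (π * m / N) := hsin.symm

theorem stmt17_general (N m : ℕ) (hm1 : 1 ≤ m) (hm2 : m ≤ N - 1) :
    ‖(∑ k ∈ Finset.range N,
        (((2 * Real.pi * k / (N : ℝ) ^ 2 : ℝ)) : ℂ) *
          Complex.exp (2 * Real.pi * Complex.I * k * m / N))‖ ≤
      Real.pi / (2 * (min m (N - m) : ℕ)) := by
  have hζ := isPrimitiveRoot_exp N (by omega)
  set ω := exp (2 * π * I / N) ^ m with hω
  have hωN : ω ^ N = 1 := by rw [← pow_mul, pow_mul', hζ.pow_eq_one, one_pow]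
  have hω1 : ω ≠ 1 := hζ.pow_ne_one_of_pos_of_lt (by omega) (by omega)
  have hsum : ∑ k ∈ range N, ((2 * π * k / N ^ 2 : ℝ) : ℂ) * exp (2 * π * I * k * m / N)
      = (2 * π / N ^ 2 : ℝ) * (N / (ω - 1)) := by
    rw [← sum_range_natCast_mul_pow_of_pow_eq_one hωN hω1, mul_sum]
    refine sum_congr rfl fun k _ => ?_
    rw [hω, ← pow_mul, ← exp_nat_mul]
    push_cast
    ring_nf
  have hN : (0 : ℝ) < N := by exact_mod_cast (by omega : 0 < N)
  have hmin : (0 : ℝ) < (min m (N - m) : ℕ) := by exact_mod_cast (by omega : 0 < min m (N - m))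
  have hsin := Real.two_mul_min_div_le_sin_pi_mul_div (by omega : m < N)
  have hsin_pos : 0 < Real.sin (π * m / N) := lt_of_lt_of_le (by positivity) hsin
  rw [hsum, norm_mul, norm_div, norm_exp_two_pi_I_div_pow_sub_one (by omega), norm_real,
    Complex.norm_natCast, Real.norm_of_nonneg (by positivity)]
  calc 2 * π / N ^ 2 * (N / (2 * Real.sin (π * m / N))) = π / (N * Real.sin (π * m / N)) := by
        field_simp
    _ ≤ π / (2 * (min m (N - m) : ℕ)) :=
        div_le_div_of_nonneg_left Real.pi_pos.le (by positivity) (by rwa [div_le_iff₀' hN] at hsin)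

theorem stmt17 (N m : ℕ) (hN : 2 ≤ N) (hm1 : 1 ≤ m) (hm2 : m ≤ N - 1) :
    ‖(∑ k ∈ Finset.range N,
        (((2 * Real.pi * k / (N : ℝ) ^ 2 : ℝ)) : ℂ) *
          Complex.exp (2 * Real.pi * Complex.I * k * m / N))‖ ≤
      Real.pi / (2 * (min m (N - m) : ℕ)) :=
  stmt17_general N m hm1 hm2
end

section
/- For all integers n ≥ 4 and k ≥ 1 with 2k > n, one has (2π)^{−k/2}·C(n+k, k−1) < 0.16·(3.7)^{n+1}, where C(n+k, k−1) denotes the binomial coefficient (n+k choose k−1). -/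
lemma mychoose_le_two_pow (m i : ℕ) : m.choose i ≤ 2 ^ m := by
  by_cases h : i ≤ m
  · calc m.choose i ≤ ∑ j ∈ Finset.range (m + 1), m.choose j :=
        Finset.single_le_sum (fun _ _ => Nat.zero_le _)
          (Finset.mem_range.2 (Nat.lt_succ_of_le h))
      _ = 2 ^ m := Nat.sum_range_choose m
  · rw [Nat.choose_eq_zero_of_lt (lt_of_not_ge h)]
    exact Nat.zero_le _

lemma myaux (n : ℕ) (hn : 4 ≤ n) : (0.8 : ℝ) * 2 ^ n < 0.16 * 3.7 ^ (n + 1) := by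
  induction n, hn using Nat.le_induction with
  | base => norm_num
  | succ m hm ih =>
    have : (0.8 : ℝ) * 2 ^ (m + 1) = 2 * (0.8 * 2 ^ m) := by ring
    rw [this]
    calc 2 * ((0.8:ℝ) * 2 ^ m) < 2 * (0.16 * 3.7 ^ (m + 1)) := by linarith
      _ ≤ 0.16 * 3.7 ^ (m + 1 + 1) := by
          rw [pow_succ (3.7:ℝ) (m+1)]
          nlinarith [pow_pos (by norm_num : (0:ℝ) < 3.7) (m+1)]

theorem stmt18 (n k : ℕ) (hn : 4 ≤ n) (hk : 1 ≤ k) (h : n < 2 * k) :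
    (2 * Real.pi) ^ (-(k : ℝ) / 2) * ((n + k).choose (k - 1) : ℝ) <
      0.16 * (3.7 : ℝ) ^ (n + 1) := by
  have hpi : (3.14 : ℝ) < Real.pi := by
    have := Real.pi_gt_d6; linarith
  set c : ℝ := (2 * Real.pi) ^ (-(1 : ℝ) / 2) with hcdef
  have hpos : (0:ℝ) < 2 * Real.pi := by linarith
  have hc0 : 0 < c := Real.rpow_pos_of_pos hpos _
  have hsplit : (2 * Real.pi) ^ (-(k : ℝ) / 2) = c ^ k := by
    rw [hcdef, ← Real.rpow_natCast ((2 * Real.pi) ^ (-(1:ℝ)/2)) k,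
      ← Real.rpow_mul (le_of_lt hpos)]
    ring_nf
  have hcs : c = (Real.sqrt (2 * Real.pi))⁻¹ := by
    rw [hcdef, Real.sqrt_eq_rpow, ← Real.rpow_neg (le_of_lt hpos)]
    norm_num
  have hsqrt : (2.5 : ℝ) ≤ Real.sqrt (2 * Real.pi) := by
    rw [show (2.5:ℝ) = Real.sqrt (6.25) by
      rw [show (6.25:ℝ) = 2.5^2 by norm_num, Real.sqrt_sq (by norm_num)]]
    exact Real.sqrt_le_sqrt (by linarith)
  have hc04 : c ≤ 0.4 := by
    rw [hcs]
    rw [inv_le_comm₀ (by linarith) (by norm_num)]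
    linarith
  have hchoose : ((n + k).choose (k - 1) : ℝ) ≤ 2 ^ (n + k) := by
    exact_mod_cast mychoose_le_two_pow (n + k) (k - 1)
  have key : c ^ k * ((n + k).choose (k - 1) : ℝ) ≤ 0.8 * 2 ^ n := by
    calc c ^ k * ((n + k).choose (k - 1) : ℝ)
        ≤ c ^ k * 2 ^ (n + k) := by
          exact mul_le_mul_of_nonneg_left hchoose (le_of_lt (pow_pos hc0 k))
      _ = (c * 2) ^ k * 2 ^ n := by rw [pow_add, mul_pow]; ring
      _ ≤ 0.8 ^ k * 2 ^ n := by
          gcongr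
          linarith
      _ ≤ 0.8 * 2 ^ n := by
          gcongr
          calc (0.8:ℝ) ^ k ≤ 0.8 ^ 1 :=
              pow_le_pow_of_le_one (by norm_num) (by norm_num) hk
            _ = 0.8 := pow_one _
  rw [hsplit]
  calc c ^ k * ((n + k).choose (k - 1) : ℝ) ≤ 0.8 * 2 ^ n := key
    _ < 0.16 * 3.7 ^ (n + 1) := myaux n hn
end
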